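/- Fix integers n ≥ 1 and ε ∈ {0,1} with n + ε ≥ 2, and let m = 2(n − 1 + 2ε). For g ≥ ε, with k the residue of g − ε mod m, α = (g − ε − k)/m, and δ = δ_min = ((g − ε − k)/2)(α − 1) + kα and p = g + δ, the inequality δ ≥ α(p − δ − ε − (n − 1 + 2ε)(α + 1)) holds, and moreover α = ⌊(p − δ − ε)/m⌋. -/

import Mathlib

/-!
Write `M = n - 1 + 2ε`, so `m = 2M`, and `g - ε = mα + k` by division with remainder. Then
`p - δ - ε = g - ε`, and both sides of the criterion equal `Mα(α - 1) + kα`: `δ_min` is exactly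
the value at which the criterion holds with equality.
-/

namespace Int

theorem sub_emod_eq_mul_ediv (x m : ℤ) : x - x % m = m * (x / m) := by
  rw [emod_def, sub_sub_cancel]

theorem sub_emod_ediv (x m : ℤ) : (x - x % m) / m = x / m := by
  rcases eq_or_ne m 0 with rfl | hm
  · simp
  · rw [sub_emod_eq_mul_ediv, mul_ediv_cancel_left _ hm]

theorem sub_emod_two_mul_ediv_two (x M : ℤ) : (x - x % (2 * M)) / 2 = M * (x / (2 * M)) := by
  rw [sub_emod_eq_mul_ediv, mul_assoc, mul_ediv_cancel_left _ two_ne_zero]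

end Int

theorem stmt_13_general (n ε : ℤ)
    (g : ℤ) :
    let m : ℤ := 2 * (n - 1 + 2 * ε)
    let k : ℤ := (g - ε) % m
    let α : ℤ := (g - ε - k) / m
    let δ : ℤ := ((g - ε - k) / 2) * (α - 1) + k * α
    let p : ℤ := g + δ
    δ ≥ α * (p - δ - ε - (n - 1 + 2 * ε) * (α + 1)) ∧ α = (p - δ - ε) / m := by
  intro m k α δ p
  have hα : α = (g - ε) / m := Int.sub_emod_ediv _ _
  have hhalf : (g - ε - k) / 2 = (n - 1 + 2 * ε) * α := by
    rw [hα]; exact Int.sub_emod_two_mul_ediv_two _ _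
  have hdiv : g - ε = m * α + k := by rw [hα]; exact (Int.mul_ediv_add_emod _ _).symm
  have hgap : p - δ - ε = g - ε := by simp only [p]; ring
  refine ⟨le_of_eq ?_, by rw [hgap, hα]⟩
  rw [hgap, hdiv]
  simp only [δ, hhalf, m]
  ring

theorem stmt_13 (n ε : ℤ) (hn : 1 ≤ n) (hε : ε = 0 ∨ ε = 1) (hnε : 2 ≤ n + ε)
    (g : ℤ) (hg : ε ≤ g) :
    let m : ℤ := 2 * (n - 1 + 2 * ε)
    let k : ℤ := (g - ε) % m
    let α : ℤ := (g - ε - k) / m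
    let δ : ℤ := ((g - ε - k) / 2) * (α - 1) + k * α
    let p : ℤ := g + δ
    δ ≥ α * (p - δ - ε - (n - 1 + 2 * ε) * (α + 1)) ∧ α = (p - δ - ε) / m :=
  stmt_13_general n ε g
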